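/- For every real z with 0 < z < 1, one has ∫ 1/((z + 1/z) − t) dσ(t) = z. Consequently the inverse K_σ of the Stieltjes transform G_σ on (0,1) is K_σ(z) = z + 1/z, and the R-transform R_σ(z) := K_σ(z) − 1/z of the semicircle law equals z. -/

import Mathlib

/-!
For `x > 2` and `s = √(x² - 4)`, the function
`t ↦ x arcsin (t/2) - √(4 - t²) - s arcsin ((xt - 4) / (2(x - t)))` is an antiderivative of
`√(4 - t²) / (x - t)` on `[-2, 2]`; the Möbius map `t ↦ (xt - 4) / (2(x - t))` sends `±2` to `±1`,
so the fundamental theorem of calculus gives `G_σ(x) = (x - √(x² - 4)) / 2`.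
For `x = z + 1/z` with `0 < z < 1` one has `√(x² - 4) = 1/z - z`, hence `G_σ(x) = z`; conversely,
squaring `√(y² - 4) = y - 2z` gives `yz = z² + 1`, i.e. `y = z + 1/z`.
-/

open MeasureTheory

noncomputable section

/-- The semicircle law: density `√(4-t²)/(2π)` on `[-2,2]`. -/
def semicircle : Measure ℝ :=
  volume.withDensity fun t => ENNReal.ofReal (Real.sqrt (4 - t ^ 2) / (2 * Real.pi))

/-- The Stieltjes (Cauchy) transform of the semicircle law. -/
def Gsc (x : ℝ) : ℝ := ∫ t, (x - t)⁻¹ ∂semicircle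

open Real Set

section Primitive

variable {x s t : ℝ}

def semicirclePrimitive (x s t : ℝ) : ℝ :=
  x * arcsin (t / 2) - √(4 - t ^ 2) - s * arcsin ((x * t - 4) / (2 * (x - t)))

lemma four_sub_sq_pos (ht : t ∈ Ioo (-2 : ℝ) 2) : 0 < 4 - t ^ 2 := by
  nlinarith [ht.1, ht.2]

lemma hasDerivAt_arcsin_div_two (ht : t ∈ Ioo (-2 : ℝ) 2) :
    HasDerivAt (fun t => arcsin (t / 2)) (√(4 - t ^ 2))⁻¹ t := by
  have hsqrt : √(1 - (t / 2) ^ 2) = √(4 - t ^ 2) / 2 := by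
    rw [show 1 - (t / 2) ^ 2 = (4 - t ^ 2) / 2 ^ 2 by ring, sqrt_div' _ (by positivity),
      sqrt_sq zero_le_two]
  have h := (hasDerivAt_arcsin (x := t / 2) (by linarith [ht.1]) (by linarith [ht.2])).comp t
    ((hasDerivAt_id' t).div_const 2)
  rw [hsqrt] at h
  exact h.congr_deriv (by field_simp)

lemma hasDerivAt_sqrt_four_sub_sq (ht : t ∈ Ioo (-2 : ℝ) 2) :
    HasDerivAt (fun t => √(4 - t ^ 2)) (-t / √(4 - t ^ 2)) t := by
  have h := ((hasDerivAt_pow 2 t).const_sub 4).sqrt (four_sub_sq_pos ht).ne'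
  exact h.congr_deriv (by push_cast; field_simp)

lemma hasDerivAt_arcsin_moebius (hx : 2 < x) (hs : s ^ 2 = x ^ 2 - 4) (hs0 : 0 < s)
    (ht : t ∈ Ioo (-2 : ℝ) 2) :
    HasDerivAt (fun t => arcsin ((x * t - 4) / (2 * (x - t))))
      (s / (√(4 - t ^ 2) * (x - t))) t := by
  set r := √(4 - t ^ 2)
  have hr0 : 0 < r := sqrt_pos.mpr (four_sub_sq_pos ht)
  have hr : r ^ 2 = 4 - t ^ 2 := sq_sqrt (four_sub_sq_pos ht).le
  have hxt : 0 < x - t := by linarith [ht.2]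
  -- the identity `(2(x - t))² - (xt - 4)² = (4 - t²)(x² - 4)`
  have hsq : 1 - ((x * t - 4) / (2 * (x - t))) ^ 2 = (r * s / (2 * (x - t))) ^ 2 := by
    field_simp
    linear_combination (-s ^ 2) * hr - (4 - t ^ 2) * hs
  have hu : |(x * t - 4) / (2 * (x - t))| < 1 := by
    rw [← sq_lt_one_iff_abs_lt_one]
    nlinarith [hsq, show 0 < (r * s / (2 * (x - t))) ^ 2 by positivity]
  have hsqrt : √(1 - ((x * t - 4) / (2 * (x - t))) ^ 2) = r * s / (2 * (x - t)) := by
    rw [hsq, sqrt_sq (by positivity)]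
  have hdiv : HasDerivAt (fun t => (x * t - 4) / (2 * (x - t)))
      (s ^ 2 / (2 * (x - t) ^ 2)) t :=
    ((((hasDerivAt_id' t).const_mul x).sub_const 4).div
      (((hasDerivAt_id' t).const_sub x).const_mul 2) (by positivity)).congr_deriv
      (by field_simp; linear_combination -hs)
  have h := (hasDerivAt_arcsin (abs_lt.mp hu).1.ne' (abs_lt.mp hu).2.ne).comp t hdiv
  rw [hsqrt] at h
  exact h.congr_deriv (by field_simp)

lemma hasDerivAt_semicirclePrimitive (hx : 2 < x) (hs : s ^ 2 = x ^ 2 - 4) (hs0 : 0 < s)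
    (ht : t ∈ Ioo (-2 : ℝ) 2) :
    HasDerivAt (semicirclePrimitive x s) (√(4 - t ^ 2) * (x - t)⁻¹) t := by
  have hr := sq_sqrt (four_sub_sq_pos ht).le
  have hr0 := sqrt_pos.mpr (four_sub_sq_pos ht)
  have hxt : x - t ≠ 0 := by linarith [ht.2]
  refine ((((hasDerivAt_arcsin_div_two ht).const_mul x).sub (hasDerivAt_sqrt_four_sub_sq ht)).sub
    ((hasDerivAt_arcsin_moebius hx hs hs0 ht).const_mul s)).congr_deriv ?_
  field_simp
  linear_combination -hr - hs

lemma continuousOn_semicirclePrimitive (hx : 2 < x) :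
    ContinuousOn (semicirclePrimitive x s) (Icc (-2) 2) := by
  have hden : ∀ t ∈ Icc (-2 : ℝ) 2, 2 * (x - t) ≠ 0 := fun t ht => by linarith [ht.2]
  unfold semicirclePrimitive
  fun_prop (disch := assumption)

lemma semicirclePrimitive_two_sub_neg_two (hx : 2 < x) :
    semicirclePrimitive x s 2 - semicirclePrimitive x s (-2) = π * (x - s) := by
  have h1 : (x * 2 - 4) / (2 * (x - 2)) = 1 := by
    rw [div_eq_one_iff_eq (by linarith)]; ring
  have h2 : (x * -2 - 4) / (2 * (x - -2)) = -1 := by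
    rw [div_eq_iff (by linarith)]; ring
  simp only [semicirclePrimitive, h1, h2]
  norm_num
  ring

lemma integral_sqrt_four_sub_sq_mul_inv_sub (hx : 2 < x) :
    ∫ t in (-2)..2, √(4 - t ^ 2) * (x - t)⁻¹ = π * (x - √(x ^ 2 - 4)) := by
  have hx4 : 0 < x ^ 2 - 4 := by nlinarith
  rw [intervalIntegral.integral_eq_sub_of_hasDerivAt_of_le (by norm_num)
    (continuousOn_semicirclePrimitive hx)
    (fun t ht => hasDerivAt_semicirclePrimitive hx (sq_sqrt hx4.le) (sqrt_pos.mpr hx4) ht)]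
  · exact semicirclePrimitive_two_sub_neg_two hx
  · have hne : ∀ t ∈ uIcc (-2 : ℝ) 2, x - t ≠ 0 := fun t ht => by
      rw [uIcc_of_le (by norm_num)] at ht
      linarith [ht.2]
    exact ContinuousOn.intervalIntegrable (by fun_prop (disch := assumption))

end Primitive

lemma integral_semicircle (f : ℝ → ℝ) :
    ∫ t, f t ∂semicircle = (2 * π)⁻¹ * ∫ t in (-2)..2, √(4 - t ^ 2) * f t := by
  have hvanish : ∀ t ∉ Icc (-2 : ℝ) 2, √(4 - t ^ 2) * f t = 0 := fun t ht => by
    rw [mem_Icc, not_and_or, not_le, not_le] at ht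
    rw [sqrt_eq_zero'.mpr (by rcases ht with ht | ht <;> nlinarith), zero_mul]
  have hdens : semicircle = volume.withDensity fun t => ↑(√(4 - t ^ 2) / (2 * π)).toNNReal := rfl
  rw [hdens, integral_withDensity_eq_integral_smul (by fun_prop),
    intervalIntegral.integral_of_le (by norm_num), ← integral_Icc_eq_integral_Ioc,
    setIntegral_eq_integral_of_forall_compl_eq_zero hvanish, ← integral_const_mul]
  congr 1 with t
  rw [NNReal.smul_def, smul_eq_mul, Real.coe_toNNReal _ (by positivity)]
  ring

lemma Gsc_eq {y : ℝ} (hy : 2 < y) : Gsc y = (y - √(y ^ 2 - 4)) / 2 := by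
  rw [Gsc, integral_semicircle, integral_sqrt_four_sub_sq_mul_inv_sub hy]
  field_simp

lemma sqrt_add_inv_sq_sub_four {z : ℝ} (h0 : 0 < z) (h1 : z ≤ 1) :
    √((z + z⁻¹) ^ 2 - 4) = z⁻¹ - z := by
  have hz : z * z⁻¹ = 1 := mul_inv_cancel₀ h0.ne'
  rw [show (z + z⁻¹) ^ 2 - 4 = (z⁻¹ - z) ^ 2 by linear_combination 4 * hz,
    sqrt_sq (by nlinarith [one_le_inv_iff₀.mpr ⟨h0, h1⟩])]

/-- For `0 < z < 1`, `∫ 1/((z + 1/z) - t) dσ(t) = z`; consequently the inverse of `G_σ` on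
`(0,1)` is `K_σ(z) = z + 1/z`, and the `R`-transform `R_σ(z) = K_σ(z) - 1/z` equals `z`. -/
theorem semicircle_inverse_stieltjes (z : ℝ) (h0 : 0 < z) (h1 : z < 1) :
    (∫ t, ((z + z⁻¹) - t)⁻¹ ∂semicircle) = z ∧
    (∀ y : ℝ, 2 < y → (Gsc y = z ↔ y = z + z⁻¹)) ∧
    (z + z⁻¹) - z⁻¹ = z := by
  have hz : z * z⁻¹ = 1 := mul_inv_cancel₀ h0.ne'
  have hK : 2 < z + z⁻¹ := by nlinarith [sq_pos_of_pos (sub_pos.mpr h1), inv_pos.mpr h0]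
  have hG : Gsc (z + z⁻¹) = z := by
    rw [Gsc_eq hK, sqrt_add_inv_sq_sub_four h0 h1.le]
    ring
  refine ⟨hG, fun y hy => ⟨fun h => ?_, fun h => h ▸ hG⟩, by ring⟩
  rw [Gsc_eq hy] at h
  have hsq : (y - 2 * z) ^ 2 = y ^ 2 - 4 := by
    rw [← sq_sqrt (show 0 ≤ y ^ 2 - 4 by nlinarith)]
    congr 1
    linarith
  have hyz : y * z = z ^ 2 + 1 := by nlinarith
  field_simp
  linarith

end
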